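/- Define χ from the addition-free binary Veblen term system φ_ω0 to theta-terms by χ(0) = 0 and χ(φ_n α) = ϑ_0 ϑ_1^n χ(α). Then χ is order-preserving: α < β implies χ(α) < χ(β). -/

import Mathlib

/-- Addition-free theta terms. -/
inductive TTerm : Type
  | zero : TTerm
  | theta : ℕ → TTerm → TTerm
  deriving DecidableEq

namespace TTerm

/-- `S 0 = -1`, `S (ϑ_i α) = i`. -/
def S : TTerm → ℤ
  | zero => -1
  | theta i _ => i

/-- Membership in the term system `T`: `ϑ_i α` is formed only when `S α ≤ i + 1`. -/
inductive WF : TTerm → Prop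
  | zero : WF zero
  | theta {i : ℕ} {a : TTerm} : WF a → S a ≤ (i : ℤ) + 1 → WF (theta i a)

/-- Coefficients `k_i`. -/
def k (i : ℕ) : TTerm → TTerm
  | zero => zero
  | theta j b => if j ≤ i then theta j b else k i b

mutual
/-- The linear order on theta terms. -/
inductive Lt : TTerm → TTerm → Prop
  | zero {a : TTerm} : a ≠ zero → Lt zero a
  | idx {i j : ℕ} {a b : TTerm} : i < j → Lt (theta i a) (theta j b)
  | left {i : ℕ} {a b : TTerm} : Lt a b → Lt (k i a) (theta i b) →
      Lt (theta i a) (theta i b)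
  | right {i : ℕ} {a b : TTerm} : Lt b a → Le (theta i a) (k i b) →
      Lt (theta i a) (theta i b)

inductive Le : TTerm → TTerm → Prop
  | refl {a : TTerm} : Le a a
  | of_lt {a b : TTerm} : Lt a b → Le a b
end

end TTerm

/-- Addition-free Veblen terms `φ_ω 0`. -/
inductive VTerm : Type
  | zero : VTerm
  | phi : ℕ → VTerm → VTerm
  deriving DecidableEq

mutual
/-- The order on Veblen terms. -/
inductive VTerm.Lt : VTerm → VTerm → Prop
  | zero {b : VTerm} : b ≠ VTerm.zero → VTerm.Lt VTerm.zero b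
  | lt {n m : ℕ} {a b : VTerm} : n < m → VTerm.Lt a (VTerm.phi m b) →
      VTerm.Lt (VTerm.phi n a) (VTerm.phi m b)
  | eq {n : ℕ} {a b : VTerm} : VTerm.Lt a b → VTerm.Lt (VTerm.phi n a) (VTerm.phi n b)
  | gt {n m : ℕ} {a b : VTerm} : m < n → VTerm.Le (VTerm.phi n a) b →
      VTerm.Lt (VTerm.phi n a) (VTerm.phi m b)

inductive VTerm.Le : VTerm → VTerm → Prop
  | refl {a : VTerm} : VTerm.Le a a
  | of_lt {a b : VTerm} : VTerm.Lt a b → VTerm.Le a b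
end

/-- `χ(0) = 0`, `χ(φ_n α) = ϑ_0 ϑ_1^n χ(α)`. -/
def chi : VTerm → TTerm
  | VTerm.zero => TTerm.zero
  | VTerm.phi n a => TTerm.theta 0 ((TTerm.theta 1)^[n] (chi a))

/-!
The image of `χ` only uses the indices `0` and `1`. On terms all of whose indices are `≤ i`
the coefficient `k_i` is the identity, so comparing `ϑ_i x` with `ϑ_i y` reduces to comparing
`x` with `y`: a joint induction gives `x < ϑ_i x` and `x < y → x < ϑ_i y`, hence `ϑ_i` is
strictly monotone there. Since `k_0 (ϑ_1^n χ α) = χ α`, each clause of the Veblen order then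
becomes the matching clause of the `ϑ_0`-comparison; the clause `α < β → φ_n α < φ_n β` also
needs `α < φ_n β`, which the same joint induction gives on the Veblen side.
-/

namespace TTerm

inductive IndicesLE (i : ℕ) : TTerm → Prop
  | zero : IndicesLE i zero
  | theta {j : ℕ} {x : TTerm} : j ≤ i → IndicesLE i x → IndicesLE i (theta j x)

section IndicesLE

variable {i : ℕ} {x y z : TTerm}

theorem k_eq_self (hx : IndicesLE i x) : k i x = x := by
  cases hx with
  | zero => rfl
  | theta hj _ => simp [k, hj]

theorem IndicesLE.iterate_theta (hx : IndicesLE i x) (n : ℕ) :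
    IndicesLE i ((TTerm.theta i)^[n] x) := by
  induction n with
  | zero => exact hx
  | succ n ih => rw [Function.iterate_succ_apply']; exact ih.theta le_rfl

private theorem theta_lt_theta_of_forall_lt_theta (hz : IndicesLE i z)
    (hlt : ∀ y, IndicesLE i y → Lt z y → Lt z (theta i y)) (hy : IndicesLE i y) (h : Lt z y) :
    Lt (theta i z) (theta i y) :=
  Lt.left h (by rw [k_eq_self hz]; exact hlt y hy h)

private theorem lt_of_theta_lt (hz : IndicesLE i z)
    (hlt : ∀ y, IndicesLE i y → Lt z y → Lt z (theta i y)) (hself : Lt z (theta i z))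
    (hy : IndicesLE i y) (h : Lt (theta i z) y) : Lt z y := by
  induction hy with
  | zero => cases h
  | @theta j w hj hw ih =>
    cases h with
    | idx h => omega
    | left _ hk => rwa [k_eq_self hz] at hk
    | right _ hle =>
      rw [k_eq_self hw] at hle
      cases hle with
      | refl => exact hlt _ (hz.theta le_rfl) hself
      | of_lt h' => exact hlt w hw (ih h')

theorem lt_theta_of_lt_and_lt_theta_self (hx : IndicesLE i x) :
    (∀ y, IndicesLE i y → Lt x y → Lt x (theta i y)) ∧ Lt x (theta i x) := by
  induction hx with
  | zero => exact ⟨fun _ _ _ => Lt.zero (by simp), Lt.zero (by simp)⟩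
  | @theta j z hj hz ih =>
    obtain ⟨hlt, hself⟩ := ih
    rcases hj.lt_or_eq with hj | rfl
    · exact ⟨fun _ _ _ => Lt.idx hj, Lt.idx hj⟩
    · exact ⟨fun y hy h => theta_lt_theta_of_forall_lt_theta hz hlt hy
          (lt_of_theta_lt hz hlt hself hy h),
        theta_lt_theta_of_forall_lt_theta hz hlt (hz.theta le_rfl) hself⟩

theorem theta_lt_theta (hx : IndicesLE i x) (hy : IndicesLE i y) (h : Lt x y) :
    Lt (theta i x) (theta i y) :=
  theta_lt_theta_of_forall_lt_theta hx (lt_theta_of_lt_and_lt_theta_self hx).1 hy h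

theorem iterate_theta_lt_iterate_theta (hx : IndicesLE i x) (hy : IndicesLE i y) (h : Lt x y)
    (n : ℕ) : Lt ((theta i)^[n] x) ((theta i)^[n] y) := by
  induction n with
  | zero => exact h
  | succ n ih =>
    rw [Function.iterate_succ_apply', Function.iterate_succ_apply']
    exact theta_lt_theta (hx.iterate_theta n) (hy.iterate_theta n) ih

end IndicesLE

end TTerm

namespace VTerm

variable {c b : VTerm} {p : ℕ}

private theorem phi_lt_phi_of_lt_of_le (hc : ∀ n b, Lt c b → Lt c (phi n b)) (hcb : Lt c b)
    (hle : Le (phi p c) b) (n : ℕ) : Lt (phi p c) (phi n b) := by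
  rcases Nat.lt_trichotomy p n with hpn | rfl | hnp
  · exact Lt.lt hpn (hc n b hcb)
  · exact Lt.eq hcb
  · exact Lt.gt hnp hle

private theorem lt_of_phi_lt (hc : ∀ n b, Lt c b → Lt c (phi n b))
    (hself : ∀ n, Lt c (phi n c)) (h : Lt (phi p c) b) : Lt c b := by
  induction b with
  | zero => cases h
  | phi q d ih =>
    cases h with
    | lt _ hc' => exact hc'
    | eq hcd => exact hc p d hcd
    | gt _ hle =>
      cases hle with
      | refl => exact hc q _ (hself p)
      | of_lt h' => exact hc q d (ih h')

theorem lt_phi_of_lt_and_lt_phi_self (a : VTerm) :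
    (∀ n b, Lt a b → Lt a (phi n b)) ∧ ∀ n, Lt a (phi n a) := by
  induction a with
  | zero => exact ⟨fun _ _ _ => Lt.zero (by simp), fun _ => Lt.zero (by simp)⟩
  | phi p c ih =>
    obtain ⟨hc, hself⟩ := ih
    exact ⟨fun n _ h => phi_lt_phi_of_lt_of_le hc (lt_of_phi_lt hc hself h) (Le.of_lt h) n,
      phi_lt_phi_of_lt_of_le hc (hself p) Le.refl⟩

theorem lt_phi_of_lt {a : VTerm} (h : Lt a b) (n : ℕ) : Lt a (phi n b) :=
  (lt_phi_of_lt_and_lt_phi_self a).1 n b h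

end VTerm

open TTerm

theorem indicesLE_one_chi (a : VTerm) : IndicesLE 1 (chi a) := by
  induction a with
  | zero => exact .zero
  | phi n a ih => exact (ih.iterate_theta n).theta zero_le_one

theorem chi_lt_theta_one (a : VTerm) (t : TTerm) : TTerm.Lt (chi a) (theta 1 t) := by
  cases a with
  | zero => exact .zero (by simp)
  | phi => exact .idx zero_lt_one

theorem k_zero_iterate_theta_one_chi (n : ℕ) (a : VTerm) :
    k 0 ((theta 1)^[n] (chi a)) = chi a := by
  induction n with
  | zero => cases a <;> simp [chi, k]
  | succ n ih => rw [Function.iterate_succ_apply']; simpa [k] using ih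

theorem iterate_theta_one_chi_lt_of_lt {n m : ℕ} (a b : VTerm) (hnm : n < m) :
    TTerm.Lt ((theta 1)^[n] (chi a)) ((theta 1)^[m] (chi b)) := by
  obtain ⟨j, rfl⟩ : ∃ j, m = n + (j + 1) := ⟨m - n - 1, by omega⟩
  rw [Function.iterate_add_apply]
  refine iterate_theta_lt_iterate_theta (indicesLE_one_chi a)
    ((indicesLE_one_chi b).iterate_theta _) ?_ n
  rw [Function.iterate_succ_apply']
  exact chi_lt_theta_one a _

theorem chi_lt_chi {α β : VTerm} (h : VTerm.Lt α β) : TTerm.Lt (chi α) (chi β) := by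
  match α, β, h with
  | _, .zero, .zero hne => exact absurd rfl hne
  | _, .phi _ _, .zero _ => exact .zero (by simp [chi])
  | .phi _ a, .phi _ b, .lt hnm ha =>
    simp only [chi]
    refine .left (iterate_theta_one_chi_lt_of_lt a b hnm) ?_
    rw [k_zero_iterate_theta_one_chi]
    exact chi_lt_chi ha
  | .phi n a, .phi _ b, .eq hab =>
    simp only [chi]
    refine .left (iterate_theta_lt_iterate_theta (indicesLE_one_chi a) (indicesLE_one_chi b)
      (chi_lt_chi hab) n) ?_
    rw [k_zero_iterate_theta_one_chi]
    exact chi_lt_chi (VTerm.lt_phi_of_lt hab n)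
  | .phi _ a, .phi _ b, .gt hmn hle =>
    simp only [chi]
    refine .right (iterate_theta_one_chi_lt_of_lt b a hmn) ?_
    rw [k_zero_iterate_theta_one_chi]
    match hle with
    | .refl => simp only [chi]; exact .refl
    | .of_lt h' => exact .of_lt (chi_lt_chi h')
termination_by sizeOf α + sizeOf β

/-- `χ` is order-preserving. -/
theorem stmt8 (α β : VTerm) (h : VTerm.Lt α β) : TTerm.Lt (chi α) (chi β) :=
  chi_lt_chi h
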